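/- arXiv:0806.1199 — 3 statements merged into one kernel-verified Lean document; each statement's English description precedes it below -/
import Mathlib

section
/- Let N ≥ 1, and let β = (β_i^j)_{i,j=1,…,N} be a matrix with all entries β_i^j ∈ (0,1) such that Σ_j β_i^j = 1 for every i and Σ_i β_i^j = 1 for every j. Let C be any generalized loop of the complete bipartite graph K_{N,N}, and define r_C = (∏_{i ∈ V_L(C)} (1 − q_i)) · (∏_{j ∈ V_R(C)} (1 − q^j)) · ∏_{(i,j) ∈ E(C)} β_i^j/(1 − β_i^j), where q_i and q^j denote the degrees in C of left vertex i and right vertex j. Then |r_C| ≤ 1. -/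
/-- The degree of left vertex `i` in the edge set `C ⊆ K_{N,N}`. -/
def degL {N : ℕ} (C : Finset (Fin N × Fin N)) (i : Fin N) : ℕ :=
  (C.filter (fun e => e.1 = i)).card

/-- The degree of right vertex `j` in the edge set `C ⊆ K_{N,N}`. -/
def degR {N : ℕ} (C : Finset (Fin N × Fin N)) (j : Fin N) : ℕ :=
  (C.filter (fun e => e.2 = j)).card

/-- A generalized loop: a nonempty edge subset of `K_{N,N}` in which every vertex
incident to an edge has degree at least 2. -/
def IsGenLoop {N : ℕ} (C : Finset (Fin N × Fin N)) : Prop :=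
  C.Nonempty ∧ ∀ e ∈ C, 2 ≤ degL C e.1 ∧ 2 ≤ degR C e.2

/-- The loop-series term `r_C` associated with beliefs `β` and a generalized loop `C`:
`r_C = ∏_{i ∈ V_L(C)} (1 - q_i) · ∏_{j ∈ V_R(C)} (1 - q^j) · ∏_{(i,j) ∈ C} β_i^j/(1-β_i^j)`. -/
noncomputable def loopTerm {N : ℕ} (β : Fin N → Fin N → ℝ)
    (C : Finset (Fin N × Fin N)) : ℝ :=
  (∏ i ∈ C.image Prod.fst, (1 - (degL C i : ℝ))) *
    (∏ j ∈ C.image Prod.snd, (1 - (degR C j : ℝ))) *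
    ∏ e ∈ C, β e.1 e.2 / (1 - β e.1 e.2)

/-!
Square `r_C`. For an edge `e = (i, j)` of `C`, let `S_i(e)` and `S^j(e)` be the total weight of the
other edges of `C` at `i` and at `j`. Double stochasticity gives `S_i(e), S^j(e) ≤ 1 - β_e`, so
`(β_e / (1 - β_e))² ≤ (β_e / S_i(e)) · (β_e / S^j(e))`, which splits `r_C²` into one factor
`(q - 1)² ∏_{e ∋ v} β_e / S_v(e)` per vertex `v` of degree `q`. AM-GM applied to each `S_v(e)`
gives `∏_{e ∋ v} S_v(e) ≥ (q - 1)^q ∏_{e ∋ v} β_e`, so each vertex factor is at most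
`(q - 1)^(2 - q) ≤ 1` because `q ≥ 2`.
-/

open Finset

section AMGM

variable {α : Type*}

theorem pow_card_mul_prod_le_sum_pow (s : Finset α) (x : α → ℝ) (hx : ∀ a ∈ s, 0 ≤ x a) :
    (#s : ℝ) ^ #s * ∏ a ∈ s, x a ≤ (∑ a ∈ s, x a) ^ #s := by
  obtain rfl | hs := s.eq_empty_or_nonempty
  · simp
  have hn : (0 : ℝ) < #s := Nat.cast_pos.2 hs.card_pos
  have hgm : (∏ a ∈ s, x a) ^ (#s : ℝ)⁻¹ ≤ (#s : ℝ)⁻¹ * ∑ a ∈ s, x a := by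
    rw [← Real.finsetProd_rpow s x hx, mul_sum]
    exact Real.geom_mean_le_arith_mean_weighted s _ x (fun _ _ => by positivity)
      (by simp [hn.ne']) hx
  have hpow := pow_le_pow_left₀ (Real.rpow_nonneg (prod_nonneg hx) _) hgm #s
  rw [← Real.rpow_natCast, ← Real.rpow_mul (prod_nonneg hx), inv_mul_cancel₀ hn.ne',
    Real.rpow_one, mul_pow, inv_pow] at hpow
  calc (#s : ℝ) ^ #s * ∏ a ∈ s, x a
      ≤ (#s : ℝ) ^ #s * (((#s : ℝ) ^ #s)⁻¹ * (∑ a ∈ s, x a) ^ #s) := by gcongr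
    _ = (∑ a ∈ s, x a) ^ #s := by field_simp

variable [DecidableEq α]

theorem prod_prod_erase_eq_pow {M : Type*} [CommMonoid M] (s : Finset α) (x : α → M) :
    ∏ a ∈ s, ∏ b ∈ s.erase a, x b = (∏ a ∈ s, x a) ^ (#s - 1) := by
  rw [prod_comm' (t' := s) (s' := s.erase) (fun a b => by
    simp only [mem_erase, ne_comm]; tauto)]
  simp_rw [prod_const, ← prod_pow]
  exact prod_congr rfl fun a ha => by rw [card_erase_of_mem ha]

theorem pow_card_sub_one_mul_prod_le_prod_sum_erase (s : Finset α) (x : α → ℝ)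
    (hx : ∀ a ∈ s, 0 ≤ x a) (hs : 2 ≤ #s) :
    ((#s : ℝ) - 1) ^ #s * ∏ a ∈ s, x a ≤ ∏ a ∈ s, ∑ b ∈ s.erase a, x b := by
  have hcard : ∀ a ∈ s, ((#(s.erase a) : ℕ) : ℝ) = (#s : ℝ) - 1 := fun a ha => by
    rw [card_erase_of_mem ha, Nat.cast_sub (by omega), Nat.cast_one]
  have hq : (0 : ℝ) ≤ (#s : ℝ) - 1 := by
    have : (1 : ℝ) ≤ #s := by exact_mod_cast (by omega : 1 ≤ #s)
    linarith
  have hx' : ∀ a ∈ s, ∀ b ∈ s.erase a, 0 ≤ x b := fun a _ b hb => hx b (mem_of_mem_erase hb)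
  -- After raising to the power `#s - 1`, the left side is `∏ a, (#s - 1) ^ (#s - 1) * ∏ b ≠ a, x b`,
  -- which AM-GM bounds factor by factor.
  refine (pow_le_pow_iff_left₀ (mul_nonneg (pow_nonneg hq _) (prod_nonneg hx))
    (prod_nonneg fun a ha => sum_nonneg (hx' a ha)) (n := #s - 1) (by omega)).1 ?_
  calc (((#s : ℝ) - 1) ^ #s * ∏ a ∈ s, x a) ^ (#s - 1)
      = ∏ a ∈ s, ((#s : ℝ) - 1) ^ (#s - 1) * ∏ b ∈ s.erase a, x b := by
        rw [prod_mul_distrib, prod_const, prod_prod_erase_eq_pow, mul_pow, ← pow_mul, ← pow_mul,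
          Nat.mul_comm]
    _ ≤ ∏ a ∈ s, (∑ b ∈ s.erase a, x b) ^ (#s - 1) := by
        refine prod_le_prod (fun a ha => mul_nonneg (pow_nonneg hq _) (prod_nonneg (hx' a ha)))
          fun a ha => ?_
        have := pow_card_mul_prod_le_sum_pow (s.erase a) x (hx' a ha)
        rwa [hcard a ha, card_erase_of_mem ha] at this
    _ = (∏ a ∈ s, ∑ b ∈ s.erase a, x b) ^ (#s - 1) := prod_pow _ _ _

theorem sq_one_sub_card_mul_prod_div_sum_erase_le_one (s : Finset α) (x : α → ℝ)
    (hx : ∀ a ∈ s, 0 < x a) (hs : 2 ≤ #s) :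
    (1 - (#s : ℝ)) ^ 2 * ∏ a ∈ s, x a / ∑ b ∈ s.erase a, x b ≤ 1 := by
  have hP : 0 < ∏ a ∈ s, x a := prod_pos hx
  have hq : (1 : ℝ) ≤ (#s : ℝ) - 1 := by
    have : (2 : ℝ) ≤ #s := by exact_mod_cast hs
    linarith
  have hamgm := pow_card_sub_one_mul_prod_le_prod_sum_erase s x (fun a ha => (hx a ha).le) hs
  have hT : 0 < ∏ a ∈ s, ∑ b ∈ s.erase a, x b := lt_of_lt_of_le (by positivity) hamgm
  rw [prod_div_distrib]
  calc (1 - (#s : ℝ)) ^ 2 * ((∏ a ∈ s, x a) / ∏ a ∈ s, ∑ b ∈ s.erase a, x b)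
      ≤ ((#s : ℝ) - 1) ^ #s * ((∏ a ∈ s, x a) / ∏ a ∈ s, ∑ b ∈ s.erase a, x b) := by
        rw [show (1 - (#s : ℝ)) ^ 2 = ((#s : ℝ) - 1) ^ 2 by ring]
        gcongr
    _ ≤ 1 := by
        rw [← mul_div_assoc]
        exact div_le_one_of_le₀ hamgm hT.le

end AMGM

theorem sq_div_one_sub_le_div_mul_div {t u v : ℝ} (hu : 0 < u) (hv : 0 < v)
    (hut : u ≤ 1 - t) (hvt : v ≤ 1 - t) : (t / (1 - t)) ^ 2 ≤ t / u * (t / v) := by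
  rw [div_pow, div_mul_div_comm, ← sq, sq (1 - t)]
  exact div_le_div_of_nonneg_left (sq_nonneg t) (mul_pos hu hv)
    (mul_le_mul hut hvt hv.le (hu.le.trans hut))

section Fiber

variable {α γ : Type*} [DecidableEq α] [DecidableEq γ]

/-- With `f = Prod.fst` (resp. `Prod.snd`) and `a` an edge of `s ⊆ K_{N,N}`, this is the weight of
the other edges of `s` at the left (resp. right) end of `a`. -/
def siblingSum (s : Finset α) (f : α → γ) (x : α → ℝ) (a : α) : ℝ :=
  ∑ b ∈ {b ∈ s | f b = f a}.erase a, x b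

variable {s : Finset α} {f : α → γ} {x : α → ℝ} {a : α}

theorem siblingSum_pos (hx : ∀ b ∈ s, 0 < x b) (h2 : 2 ≤ #{b ∈ s | f b = f a}) :
    0 < siblingSum s f x a := by
  refine sum_pos (fun b hb => hx b (mem_filter.1 (mem_of_mem_erase hb)).1) ?_
  rw [← card_pos]
  have := pred_card_le_card_erase (s := {b ∈ s | f b = f a}) (a := a)
  omega

theorem siblingSum_le_one_sub (ha : a ∈ s) (h : ∑ b ∈ s with f b = f a, x b ≤ 1) :
    siblingSum s f x a ≤ 1 - x a := by
  have := add_sum_erase _ x (mem_filter.2 ⟨ha, rfl⟩ : a ∈ {b ∈ s | f b = f a})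
  rw [siblingSum]
  linarith

theorem prod_one_sub_card_fiber_sq_mul_prod_div_siblingSum_le_one
    (hx : ∀ a ∈ s, 0 < x a) (hf : ∀ a ∈ s, 2 ≤ #{b ∈ s | f b = f a}) :
    (∏ c ∈ s.image f, (1 - (#{b ∈ s | f b = c} : ℝ)) ^ 2) *
      ∏ a ∈ s, x a / siblingSum s f x a ≤ 1 := by
  rw [← prod_fiberwise_of_maps_to (fun a ha => mem_image_of_mem f ha), ← prod_mul_distrib]
  refine prod_le_one (fun c _ => mul_nonneg (sq_nonneg _) (prod_nonneg fun a ha => ?_)) ?_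
  · have ha := (mem_filter.1 ha).1
    exact div_nonneg (hx a ha).le (siblingSum_pos hx (hf a ha)).le
  · intro c hc
    obtain ⟨a, ha, rfl⟩ := mem_image.1 hc
    have hfiber : ∀ b ∈ ({b ∈ s | f b = f a} : Finset α),
        x b / siblingSum s f x b = x b / ∑ b' ∈ {b ∈ s | f b = f a}.erase b, x b' := by
      intro b hb
      rw [siblingSum, (mem_filter.1 hb).2]
    rw [prod_congr rfl hfiber]
    exact sq_one_sub_card_mul_prod_div_sum_erase_le_one _ x
      (fun b hb => hx b (mem_filter.1 hb).1) (hf a ha)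

variable {δ : Type*} [DecidableEq δ] {g : α → δ}

theorem prod_one_sub_card_fiber_sq_mul_prod_sq_div_one_sub_le_one (hx : ∀ a ∈ s, 0 < x a)
    (hf : ∀ a ∈ s, 2 ≤ #{b ∈ s | f b = f a}) (hg : ∀ a ∈ s, 2 ≤ #{b ∈ s | g b = g a})
    (hfx : ∀ a ∈ s, ∑ b ∈ s with f b = f a, x b ≤ 1)
    (hgx : ∀ a ∈ s, ∑ b ∈ s with g b = g a, x b ≤ 1) :
    (∏ c ∈ s.image f, (1 - (#{b ∈ s | f b = c} : ℝ)) ^ 2) *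
      (∏ d ∈ s.image g, (1 - (#{b ∈ s | g b = d} : ℝ)) ^ 2) *
      ∏ a ∈ s, (x a / (1 - x a)) ^ 2 ≤ 1 := by
  have hsibf : ∀ a ∈ s, 0 < siblingSum s f x a := fun a ha => siblingSum_pos hx (hf a ha)
  have hsibg : ∀ a ∈ s, 0 < siblingSum s g x a := fun a ha => siblingSum_pos hx (hg a ha)
  have hedges : ∏ a ∈ s, (x a / (1 - x a)) ^ 2 ≤
      (∏ a ∈ s, x a / siblingSum s f x a) * ∏ a ∈ s, x a / siblingSum s g x a := by
    rw [← prod_mul_distrib]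
    exact prod_le_prod (fun _ _ => sq_nonneg _) fun a ha =>
      sq_div_one_sub_le_div_mul_div (hsibf a ha) (hsibg a ha)
        (siblingSum_le_one_sub ha (hfx a ha)) (siblingSum_le_one_sub ha (hgx a ha))
  have hleft := prod_one_sub_card_fiber_sq_mul_prod_div_siblingSum_le_one hx hf
  have hright := prod_one_sub_card_fiber_sq_mul_prod_div_siblingSum_le_one hx hg
  have hA : 0 ≤ ∏ c ∈ s.image f, (1 - (#{b ∈ s | f b = c} : ℝ)) ^ 2 := by positivity
  have hB : 0 ≤ ∏ d ∈ s.image g, (1 - (#{b ∈ s | g b = d} : ℝ)) ^ 2 := by positivity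
  have hR : 0 ≤ ∏ a ∈ s, x a / siblingSum s g x a :=
    prod_nonneg fun a ha => div_nonneg (hx a ha).le (hsibg a ha).le
  linarith [mul_le_mul_of_nonneg_left hedges (mul_nonneg hA hB),
    mul_le_mul hleft hright (mul_nonneg hB hR) zero_le_one]

end Fiber

theorem sum_filter_fst_eq_le {ι κ : Type*} [DecidableEq ι] [Fintype κ] (s : Finset (ι × κ))
    (β : ι → κ → ℝ) (hβ : ∀ i j, 0 ≤ β i j) (i : ι) :
    ∑ e ∈ s with e.1 = i, β e.1 e.2 ≤ ∑ j, β i j := by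
  refine (sum_le_sum_of_subset_of_nonneg (fun e he => ?_) fun e _ _ => hβ _ _).trans_eq
    (sum_map univ (Function.Embedding.sectR i κ) fun e => β e.1 e.2)
  simp [← (mem_filter.1 he).2]

theorem sum_filter_snd_eq_le {ι κ : Type*} [DecidableEq κ] [Fintype ι] (s : Finset (ι × κ))
    (β : ι → κ → ℝ) (hβ : ∀ i j, 0 ≤ β i j) (j : κ) :
    ∑ e ∈ s with e.2 = j, β e.1 e.2 ≤ ∑ i, β i j := by
  refine (sum_le_sum_of_subset_of_nonneg (fun e he => ?_) fun e _ _ => hβ _ _).trans_eq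
    (sum_map univ (Function.Embedding.sectL ι j) fun e => β e.1 e.2)
  simp [← (mem_filter.1 he).2]

theorem abs_loopTerm_le_one_general (N : ℕ) (β : Fin N → Fin N → ℝ)
    (hβ : ∀ i j, β i j ∈ Set.Ioo (0 : ℝ) 1)
    (hrow : ∀ i, ∑ j, β i j = 1) (hcol : ∀ j, ∑ i, β i j = 1)
    (C : Finset (Fin N × Fin N)) (hC : IsGenLoop C) :
    |loopTerm β C| ≤ 1 := by
  have hβ0 : ∀ i j, 0 ≤ β i j := fun i j => (hβ i j).1.le
  rw [← sq_le_one_iff_abs_le_one, loopTerm, mul_pow, mul_pow, ← prod_pow, ← prod_pow, ← prod_pow]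
  exact prod_one_sub_card_fiber_sq_mul_prod_sq_div_one_sub_le_one (x := Function.uncurry β)
    (fun e _ => (hβ e.1 e.2).1) (fun e he => (hC.2 e he).1) (fun e he => (hC.2 e he).2)
    (fun e _ => (sum_filter_fst_eq_le C β hβ0 e.1).trans (hrow e.1).le)
    (fun e _ => (sum_filter_snd_eq_le C β hβ0 e.2).trans (hcol e.2).le)

/-- For doubly stochastic beliefs with entries in `(0,1)`, every generalized-loop
contribution `r_C` to the loop series satisfies `|r_C| ≤ 1`. -/
theorem abs_loopTerm_le_one (N : ℕ) (hN : 1 ≤ N) (β : Fin N → Fin N → ℝ)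
    (hβ : ∀ i j, β i j ∈ Set.Ioo (0 : ℝ) 1)
    (hrow : ∀ i, ∑ j, β i j = 1) (hcol : ∀ j, ∑ i, β i j = 1)
    (C : Finset (Fin N × Fin N)) (hC : IsGenLoop C) :
    |loopTerm β C| ≤ 1 :=
  abs_loopTerm_le_one_general N β hβ hrow hcol C hC
end

section
/- Let N ≥ 1, let p = (p_i^j) be an N×N matrix with all entries strictly positive, and let β = (β_i^j) be a matrix with all entries in (0,1) such that Σ_j β_i^j = 1 for every i and Σ_i β_i^j = 1 for every j, and such that there exist positive reals u_1,…,u_N, v^1,…,v^N with β_i^j(1 − β_i^j) = p_i^j · u_i · v^j for all i,j (a Belief Propagation fixed point). Define the Bethe free energy F_BP(β) = Σ_{i,j} ( β_i^j ln(β_i^j/p_i^j) − (1 − β_i^j) ln(1 − β_i^j) ) and Z_BP = exp(−F_BP(β)). Then the permanent of p satisfies per(p) = Z_BP · ( 1 + Σ_C r_C ), where the sum runs over all generalized loops C of K_{N,N} and r_C = (∏_{i ∈ V_L(C)} (1 − q_i)) (∏_{j ∈ V_R(C)} (1 − q^j)) ∏_{(i,j) ∈ E(C)} β_i^j/(1 −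 β_i^j). -/
open Finset

lemma row_id {N : ℕ} (γ : Fin N → ℝ) (hsum : ∑ j, γ j = 1) (S : Finset (Fin N)) :
    ∑ j, γ j * ∏ k ∈ S, ((if k = j then (1:ℝ) else 0) - γ k)
      = (1 - (S.card : ℝ)) * ∏ k ∈ S, (-γ k) := by
  classical
  induction S using Finset.induction_on with
  | empty => simpa using hsum
  | @insert a S ha ih =>
    rw [Finset.card_insert_of_notMem ha]
    simp only [Finset.prod_insert ha]
    have key : ∀ j, γ j * (((if a = j then (1:ℝ) else 0) - γ a) * ∏ k ∈ S, ((if k = j then (1:ℝ) else 0) - γ k))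
        = (if a = j then (1:ℝ) else 0) * (γ j * ∏ k ∈ S, ((if k = j then (1:ℝ) else 0) - γ k))
          - γ a * (γ j * ∏ k ∈ S, ((if k = j then (1:ℝ) else 0) - γ k)) := by
      intro j; ring
    rw [Finset.sum_congr rfl (fun j _ => key j), Finset.sum_sub_distrib, ← Finset.mul_sum, ih]
    have h1 : ∑ j, (if a = j then (1:ℝ) else 0) * (γ j * ∏ k ∈ S, ((if k = j then (1:ℝ) else 0) - γ k))
        = γ a * ∏ k ∈ S, (-γ k) := by
      simp only [ite_mul, one_mul, zero_mul]
      rw [Finset.sum_ite_eq (Finset.univ) a]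
      simp only [Finset.mem_univ, if_true]
      congr 1
      exact Finset.prod_congr rfl (fun k hk => by
        have : k ≠ a := fun h => ha (h ▸ hk)
        simp [this])
    rw [h1]
    push_cast
    ring

lemma filter_fst_prod {N : ℕ} (C : Finset (Fin N × Fin N)) (i : Fin N)
    (f : Fin N × Fin N → ℝ) :
    ∏ e ∈ C.filter (fun e => e.1 = i), f e
      = ∏ k ∈ (C.filter (fun e => e.1 = i)).image Prod.snd, f (i, k) := by
  classical
  rw [Finset.prod_image]
  · refine Finset.prod_congr rfl (fun e he => ?_)
    have h1 : e.1 = i := (Finset.mem_filter.mp he).2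
    rw [← h1]
  · intro x hx y hy hxy
    have hx1 : x.1 = i := (Finset.mem_filter.mp hx).2
    have hy1 : y.1 = i := (Finset.mem_filter.mp hy).2
    exact Prod.ext (hx1.trans hy1.symm) hxy

lemma degL_eq_card_image {N : ℕ} (C : Finset (Fin N × Fin N)) (i : Fin N) :
    degL C i = ((C.filter (fun e => e.1 = i)).image Prod.snd).card := by
  classical
  rw [Finset.card_image_of_injOn]
  · rfl
  · intro x hx y hy hxy
    exact Prod.ext (((Finset.mem_filter.mp hx).2).trans ((Finset.mem_filter.mp hy).2).symm) hxy

lemma row_id_edge {N : ℕ} (β : Fin N → Fin N → ℝ) (hrow : ∀ i, ∑ j, β i j = 1)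
    (C : Finset (Fin N × Fin N)) (i : Fin N) :
    ∑ j, β i j * ∏ e ∈ C.filter (fun e => e.1 = i),
        ((if e.2 = j then (1:ℝ) else 0) - β e.1 e.2)
      = (1 - (degL C i : ℝ)) * ∏ e ∈ C.filter (fun e => e.1 = i), (-β e.1 e.2) := by
  classical
  have h2 := row_id (β i) (hrow i) ((C.filter (fun e => e.1 = i)).image Prod.snd)
  calc ∑ j, β i j * ∏ e ∈ C.filter (fun e => e.1 = i),
        ((if e.2 = j then (1:ℝ) else 0) - β e.1 e.2)
      = ∑ j, β i j * ∏ k ∈ (C.filter (fun e => e.1 = i)).image Prod.snd,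
          ((if k = j then (1:ℝ) else 0) - β i k) := by
        refine Finset.sum_congr rfl (fun j _ => ?_)
        rw [filter_fst_prod C i (fun e => (if e.2 = j then (1:ℝ) else 0) - β e.1 e.2)]
    _ = (1 - ((((C.filter (fun e => e.1 = i)).image Prod.snd)).card : ℝ)) *
          ∏ k ∈ (C.filter (fun e => e.1 = i)).image Prod.snd, (-β i k) := h2
    _ = (1 - (degL C i : ℝ)) * ∏ e ∈ C.filter (fun e => e.1 = i), (-β e.1 e.2) := by
        rw [degL_eq_card_image, filter_fst_prod C i (fun e => -β e.1 e.2)]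

lemma claimA {N : ℕ} (β : Fin N → Fin N → ℝ) (hrow : ∀ i, ∑ j, β i j = 1)
    (C : Finset (Fin N × Fin N)) :
    (∏ i, (1 - (degL C i : ℝ))) * ∏ e ∈ C, (-β e.1 e.2)
      = ∑ τ : Fin N → Fin N, (∏ i, β i (τ i)) *
          ∏ e ∈ C, ((if τ e.1 = e.2 then (1:ℝ) else 0) - β e.1 e.2) := by
  classical
  have fib : ∀ g : Fin N × Fin N → ℝ,
      ∏ e ∈ C, g e = ∏ i, ∏ e ∈ C.filter (fun e => e.1 = i), g e := by
    intro g
    rw [Finset.prod_fiberwise_of_maps_to (fun e _ => Finset.mem_univ e.1)]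
  have step : ∀ τ : Fin N → Fin N,
      (∏ i, β i (τ i)) * ∏ e ∈ C, ((if τ e.1 = e.2 then (1:ℝ) else 0) - β e.1 e.2)
        = ∏ i, (β i (τ i) * ∏ e ∈ C.filter (fun e => e.1 = i),
            ((if e.2 = τ i then (1:ℝ) else 0) - β e.1 e.2)) := by
    intro τ
    rw [fib, ← Finset.prod_mul_distrib]
    refine Finset.prod_congr rfl (fun i _ => ?_)
    congr 1
    refine Finset.prod_congr rfl (fun e he => ?_)
    have h1 : e.1 = i := (Finset.mem_filter.mp he).2
    rw [h1]
    congr 1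
    simp [eq_comm]
  have lhs_eq : (∏ i, (1 - (degL C i : ℝ))) * ∏ e ∈ C, (-β e.1 e.2)
      = ∏ i, ∑ j, (β i j * ∏ e ∈ C.filter (fun e => e.1 = i),
          ((if e.2 = j then (1:ℝ) else 0) - β e.1 e.2)) := by
    rw [fib (fun e => -β e.1 e.2), ← Finset.prod_mul_distrib]
    exact (Finset.prod_congr rfl (fun i _ => row_id_edge β hrow C i)).symm
  rw [lhs_eq, Finset.prod_univ_sum, Fintype.piFinset_univ]
  exact Finset.sum_congr rfl (fun τ _ => (step τ).symm)

lemma filter_snd_prod {N : ℕ} (C : Finset (Fin N × Fin N)) (j : Fin N)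
    (f : Fin N × Fin N → ℝ) :
    ∏ e ∈ C.filter (fun e => e.2 = j), f e
      = ∏ k ∈ (C.filter (fun e => e.2 = j)).image Prod.fst, f (k, j) := by
  classical
  rw [Finset.prod_image]
  · refine Finset.prod_congr rfl (fun e he => ?_)
    have h1 : e.2 = j := (Finset.mem_filter.mp he).2
    rw [← h1]
  · intro x hx y hy hxy
    exact Prod.ext hxy (((Finset.mem_filter.mp hx).2).trans ((Finset.mem_filter.mp hy).2).symm)

lemma degR_eq_card_image {N : ℕ} (C : Finset (Fin N × Fin N)) (j : Fin N) :
    degR C j = ((C.filter (fun e => e.2 = j)).image Prod.fst).card := by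
  classical
  rw [Finset.card_image_of_injOn]
  · rfl
  · intro x hx y hy hxy
    exact Prod.ext hxy (((Finset.mem_filter.mp hx).2).trans ((Finset.mem_filter.mp hy).2).symm)

lemma col_id_edge {N : ℕ} (β : Fin N → Fin N → ℝ) (hcol : ∀ j, ∑ i, β i j = 1)
    (C : Finset (Fin N × Fin N)) (j : Fin N) :
    ∑ i, β i j * ∏ e ∈ C.filter (fun e => e.2 = j),
        ((if e.1 = i then (1:ℝ) else 0) - β e.1 e.2)
      = (1 - (degR C j : ℝ)) * ∏ e ∈ C.filter (fun e => e.2 = j), (-β e.1 e.2) := by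
  classical
  have h2 := row_id (fun i => β i j) (hcol j) ((C.filter (fun e => e.2 = j)).image Prod.fst)
  calc ∑ i, β i j * ∏ e ∈ C.filter (fun e => e.2 = j),
        ((if e.1 = i then (1:ℝ) else 0) - β e.1 e.2)
      = ∑ i, β i j * ∏ k ∈ (C.filter (fun e => e.2 = j)).image Prod.fst,
          ((if k = i then (1:ℝ) else 0) - β k j) := by
        refine Finset.sum_congr rfl (fun i _ => ?_)
        rw [filter_snd_prod C j (fun e => (if e.1 = i then (1:ℝ) else 0) - β e.1 e.2)]
    _ = (1 - ((((C.filter (fun e => e.2 = j)).image Prod.fst)).card : ℝ)) *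
          ∏ k ∈ (C.filter (fun e => e.2 = j)).image Prod.fst, (-β k j) := h2
    _ = (1 - (degR C j : ℝ)) * ∏ e ∈ C.filter (fun e => e.2 = j), (-β e.1 e.2) := by
        rw [degR_eq_card_image, filter_snd_prod C j (fun e => -β e.1 e.2)]

lemma claimB {N : ℕ} (β : Fin N → Fin N → ℝ) (hcol : ∀ j, ∑ i, β i j = 1)
    (C : Finset (Fin N × Fin N)) :
    (∏ j, (1 - (degR C j : ℝ))) * ∏ e ∈ C, (-β e.1 e.2)
      = ∑ ρ : Fin N → Fin N, (∏ j, β (ρ j) j) *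
          ∏ e ∈ C, ((if ρ e.2 = e.1 then (1:ℝ) else 0) - β e.1 e.2) := by
  classical
  have fib : ∀ g : Fin N × Fin N → ℝ,
      ∏ e ∈ C, g e = ∏ j, ∏ e ∈ C.filter (fun e => e.2 = j), g e := by
    intro g
    rw [Finset.prod_fiberwise_of_maps_to (fun e _ => Finset.mem_univ e.2)]
  have step : ∀ ρ : Fin N → Fin N,
      (∏ j, β (ρ j) j) * ∏ e ∈ C, ((if ρ e.2 = e.1 then (1:ℝ) else 0) - β e.1 e.2)
        = ∏ j, (β (ρ j) j * ∏ e ∈ C.filter (fun e => e.2 = j),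
            ((if e.1 = ρ j then (1:ℝ) else 0) - β e.1 e.2)) := by
    intro ρ
    rw [fib, ← Finset.prod_mul_distrib]
    refine Finset.prod_congr rfl (fun j _ => ?_)
    congr 1
    refine Finset.prod_congr rfl (fun e he => ?_)
    have h1 : e.2 = j := (Finset.mem_filter.mp he).2
    rw [h1]
    congr 1
    simp [eq_comm]
  have lhs_eq : (∏ j, (1 - (degR C j : ℝ))) * ∏ e ∈ C, (-β e.1 e.2)
      = ∏ j, ∑ i, (β i j * ∏ e ∈ C.filter (fun e => e.2 = j),
          ((if e.1 = i then (1:ℝ) else 0) - β e.1 e.2)) := by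
    rw [fib (fun e => -β e.1 e.2), ← Finset.prod_mul_distrib]
    exact (Finset.prod_congr rfl (fun j _ => col_id_edge β hcol C j)).symm
  rw [lhs_eq, Finset.prod_univ_sum, Fintype.piFinset_univ]
  exact Finset.sum_congr rfl (fun ρ _ => (step ρ).symm)

noncomputable def Dfun {N : ℕ} (β : Fin N → Fin N → ℝ) (τ ρ : Fin N → Fin N)
    (e : Fin N × Fin N) : ℝ :=
  ((if τ e.1 = e.2 then (1:ℝ) else 0) - β e.1 e.2) *
    ((if ρ e.2 = e.1 then (1:ℝ) else 0) - β e.1 e.2) / (β e.1 e.2 * (1 - β e.1 e.2))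

noncomputable def rP {N : ℕ} (β : Fin N → Fin N → ℝ) (C : Finset (Fin N × Fin N)) : ℝ :=
  (∏ i, (1 - (degL C i : ℝ))) * (∏ j, (1 - (degR C j : ℝ))) *
    ∏ e ∈ C, β e.1 e.2 / (1 - β e.1 e.2)

lemma rP_eq {N : ℕ} (β : Fin N → Fin N → ℝ) (hβ : ∀ i j, β i j ∈ Set.Ioo (0 : ℝ) 1)
    (hrow : ∀ i, ∑ j, β i j = 1) (hcol : ∀ j, ∑ i, β i j = 1)
    (C : Finset (Fin N × Fin N)) :
    rP β C = ∑ τ : Fin N → Fin N, ∑ ρ : Fin N → Fin N,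
      (∏ i, β i (τ i)) * (∏ j, β (ρ j) j) * ∏ e ∈ C, Dfun β τ ρ e := by
  classical
  have hne : ∀ e : Fin N × Fin N, β e.1 e.2 * (1 - β e.1 e.2) ≠ 0 := fun e =>
    mul_ne_zero (ne_of_gt (hβ e.1 e.2).1) (by have := (hβ e.1 e.2).2; linarith)
  set X : ℝ := ∏ e ∈ C, (β e.1 e.2 * (1 - β e.1 e.2)) with hX
  have hXne : X ≠ 0 := Finset.prod_ne_zero_iff.mpr (fun e _ => hne e)
  apply mul_right_cancel₀ hXne
  have hmul : ∀ e ∈ C, β e.1 e.2 / (1 - β e.1 e.2) * (β e.1 e.2 * (1 - β e.1 e.2))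
      = (-β e.1 e.2) * (-β e.1 e.2) := by
    intro e _
    have h2 : (1 - β e.1 e.2) ≠ 0 := by have := (hβ e.1 e.2).2; linarith
    field_simp
  have merge : (∏ e ∈ C, β e.1 e.2 / (1 - β e.1 e.2)) * X
      = (∏ e ∈ C, (-β e.1 e.2)) * ∏ e ∈ C, (-β e.1 e.2) := by
    rw [hX, ← Finset.prod_mul_distrib, ← Finset.prod_mul_distrib]
    exact Finset.prod_congr rfl hmul
  have lhs : rP β C * X
      = ((∏ i, (1 - (degL C i : ℝ))) * ∏ e ∈ C, (-β e.1 e.2)) *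
        ((∏ j, (1 - (degR C j : ℝ))) * ∏ e ∈ C, (-β e.1 e.2)) := by
    rw [rP]
    linear_combination ((∏ i, (1 - (degL C i : ℝ))) * ∏ j, (1 - (degR C j : ℝ))) * merge
  rw [lhs, claimA β hrow C, claimB β hcol C, Finset.sum_mul_sum]
  rw [Finset.sum_mul, Finset.sum_congr rfl (fun τ _ => Finset.sum_mul _ _ _)]
  refine Finset.sum_congr rfl (fun τ _ => Finset.sum_congr rfl (fun ρ _ => ?_))
  have hmul2 : ∀ e ∈ C, Dfun β τ ρ e * (β e.1 e.2 * (1 - β e.1 e.2))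
      = ((if τ e.1 = e.2 then (1:ℝ) else 0) - β e.1 e.2) *
        ((if ρ e.2 = e.1 then (1:ℝ) else 0) - β e.1 e.2) := by
    intro e _
    rw [Dfun, div_mul_cancel₀ _ (hne e)]
  have merge2 : (∏ e ∈ C, Dfun β τ ρ e) * X
      = (∏ e ∈ C, ((if τ e.1 = e.2 then (1:ℝ) else 0) - β e.1 e.2)) *
        ∏ e ∈ C, ((if ρ e.2 = e.1 then (1:ℝ) else 0) - β e.1 e.2) := by
    rw [hX, ← Finset.prod_mul_distrib, ← Finset.prod_mul_distrib]
    exact Finset.prod_congr rfl hmul2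
  linear_combination (-((∏ i, β i (τ i)) * ∏ j, β (ρ j) j)) * merge2

lemma one_add_D {N : ℕ} (β : Fin N → Fin N → ℝ) (hβ : ∀ i j, β i j ∈ Set.Ioo (0 : ℝ) 1)
    (τ ρ : Fin N → Fin N) (e : Fin N × Fin N) :
    1 + Dfun β τ ρ e =
      if τ e.1 = e.2 then (if ρ e.2 = e.1 then (β e.1 e.2)⁻¹ else 0)
      else (if ρ e.2 = e.1 then 0 else (1 - β e.1 e.2)⁻¹) := by
  have h1 : β e.1 e.2 ≠ 0 := ne_of_gt (hβ e.1 e.2).1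
  have h2 : (1 : ℝ) - β e.1 e.2 ≠ 0 := by have := (hβ e.1 e.2).2; linarith
  rw [Dfun]
  by_cases hτ : τ e.1 = e.2 <;> by_cases hρ : ρ e.2 = e.1 <;>
      simp only [hτ, hρ, if_true, if_false] <;> field_simp <;> try ring
  all_goals tauto

lemma prod_one_add_D {N : ℕ} (β : Fin N → Fin N → ℝ)
    (hβ : ∀ i j, β i j ∈ Set.Ioo (0 : ℝ) 1) (τ ρ : Fin N → Fin N) :
    ∏ e : Fin N × Fin N, (1 + Dfun β τ ρ e) =
      if (∀ e : Fin N × Fin N, τ e.1 = e.2 ↔ ρ e.2 = e.1) then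
        ∏ e : Fin N × Fin N, (if τ e.1 = e.2 then (β e.1 e.2)⁻¹ else (1 - β e.1 e.2)⁻¹)
      else 0 := by
  classical
  by_cases H : ∀ e : Fin N × Fin N, τ e.1 = e.2 ↔ ρ e.2 = e.1
  · rw [if_pos H]
    refine Finset.prod_congr rfl (fun e _ => ?_)
    rw [one_add_D β hβ τ ρ e]
    by_cases hτ : τ e.1 = e.2
    · rw [if_pos hτ, if_pos ((H e).mp hτ), if_pos hτ]
    · rw [if_neg hτ, if_neg (fun h => hτ ((H e).mpr h)), if_neg hτ]
  · rw [if_neg H]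
    push_neg at H
    obtain ⟨e, he⟩ := H
    refine Finset.prod_eq_zero (Finset.mem_univ e) ?_
    rw [one_add_D β hβ τ ρ e]
    rcases he with ⟨hτ, hρ⟩ | ⟨hτ, hρ⟩
    · rw [if_pos hτ, if_neg hρ]
    · rw [if_neg hτ, if_pos hρ]

lemma sum_rP {N : ℕ} (β : Fin N → Fin N → ℝ) (hβ : ∀ i j, β i j ∈ Set.Ioo (0 : ℝ) 1)
    (hrow : ∀ i, ∑ j, β i j = 1) (hcol : ∀ j, ∑ i, β i j = 1) :
    ∑ C : Finset (Fin N × Fin N), rP β C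
      = ∑ π : Equiv.Perm (Fin N), (∏ i, β i (π i)) * (∏ i, β i (π i)) *
          ∏ e : Fin N × Fin N,
            (if π e.1 = e.2 then (β e.1 e.2)⁻¹ else (1 - β e.1 e.2)⁻¹) := by
  classical
  have hsumC : ∀ τ ρ : Fin N → Fin N,
      ∑ C : Finset (Fin N × Fin N), ∏ e ∈ C, Dfun β τ ρ e
        = ∏ e : Fin N × Fin N, (1 + Dfun β τ ρ e) := by
    intro τ ρ
    have : ∏ e : Fin N × Fin N, (Dfun β τ ρ e + 1)
        = ∑ C ∈ (univ : Finset (Fin N × Fin N)).powerset,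
            (∏ e ∈ C, Dfun β τ ρ e) * ∏ e ∈ univ \ C, (1 : ℝ) :=
      Finset.prod_add _ _ _
    simp only [Finset.prod_const_one, mul_one, Finset.powerset_univ] at this
    rw [← this]
    exact Finset.prod_congr rfl (fun e _ => (add_comm _ _))
  calc ∑ C : Finset (Fin N × Fin N), rP β C
      = ∑ τ : Fin N → Fin N, ∑ ρ : Fin N → Fin N,
          (∏ i, β i (τ i)) * (∏ j, β (ρ j) j) *
            ∑ C : Finset (Fin N × Fin N), ∏ e ∈ C, Dfun β τ ρ e := by
        rw [Finset.sum_congr rfl (fun C _ => rP_eq β hβ hrow hcol C), Finset.sum_comm]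
        refine Finset.sum_congr rfl (fun τ _ => ?_)
        rw [Finset.sum_comm]
        refine Finset.sum_congr rfl (fun ρ _ => ?_)
        rw [Finset.mul_sum]
    _ = ∑ τ : Fin N → Fin N, ∑ ρ : Fin N → Fin N,
          (∏ i, β i (τ i)) * (∏ j, β (ρ j) j) *
            (if (∀ e : Fin N × Fin N, τ e.1 = e.2 ↔ ρ e.2 = e.1) then
              ∏ e : Fin N × Fin N, (if τ e.1 = e.2 then (β e.1 e.2)⁻¹ else (1 - β e.1 e.2)⁻¹)
            else 0) := by
        refine Finset.sum_congr rfl (fun τ _ => Finset.sum_congr rfl (fun ρ _ => ?_))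
        rw [hsumC τ ρ, prod_one_add_D β hβ τ ρ]
    _ = ∑ x : (Fin N → Fin N) × (Fin N → Fin N),
          (if (∀ e : Fin N × Fin N, x.1 e.1 = e.2 ↔ x.2 e.2 = e.1) then
            (∏ i, β i (x.1 i)) * (∏ j, β (x.2 j) j) *
              ∏ e : Fin N × Fin N, (if x.1 e.1 = e.2 then (β e.1 e.2)⁻¹ else (1 - β e.1 e.2)⁻¹)
          else 0) := by
        rw [Fintype.sum_prod_type]
        refine Finset.sum_congr rfl (fun τ _ => Finset.sum_congr rfl (fun ρ _ => ?_))
        by_cases h : (∀ e : Fin N × Fin N, τ e.1 = e.2 ↔ ρ e.2 = e.1) <;>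
          simp [h]
    _ = ∑ x ∈ Finset.univ.filter
          (fun x : (Fin N → Fin N) × (Fin N → Fin N) =>
            ∀ e : Fin N × Fin N, x.1 e.1 = e.2 ↔ x.2 e.2 = e.1),
          (∏ i, β i (x.1 i)) * (∏ j, β (x.2 j) j) *
            ∏ e : Fin N × Fin N, (if x.1 e.1 = e.2 then (β e.1 e.2)⁻¹ else (1 - β e.1 e.2)⁻¹) := by
        rw [Finset.sum_filter]
    _ = ∑ π : Equiv.Perm (Fin N), (∏ i, β i (π i)) * (∏ j, β (π.symm j) j) *
          ∏ e : Fin N × Fin N,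
            (if π e.1 = e.2 then (β e.1 e.2)⁻¹ else (1 - β e.1 e.2)⁻¹) := by
        refine Finset.sum_bij'
          (fun x hx => (⟨x.1, x.2,
            fun i => ((Finset.mem_filter.mp hx).2 (i, x.1 i)).mp rfl,
            fun j => ((Finset.mem_filter.mp hx).2 (x.2 j, j)).mpr rfl⟩ : Equiv.Perm (Fin N)))
          (fun π _ => (⇑π, ⇑π.symm)) ?_ ?_ ?_ ?_ ?_
        · intro x hx
          exact Finset.mem_univ _
        · intro π _
          refine Finset.mem_filter.mpr ⟨Finset.mem_univ _, fun e => ?_⟩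
          dsimp only
          constructor
          · intro h; rw [← h, Equiv.symm_apply_apply]
          · intro h; rw [← h, Equiv.apply_symm_apply]
        · intro x hx
          rfl
        · intro π hπ
          rfl
        · intro x hx
          rfl
    _ = ∑ π : Equiv.Perm (Fin N), (∏ i, β i (π i)) * (∏ i, β i (π i)) *
          ∏ e : Fin N × Fin N,
            (if π e.1 = e.2 then (β e.1 e.2)⁻¹ else (1 - β e.1 e.2)⁻¹) := by
        refine Finset.sum_congr rfl (fun π _ => ?_)
        congr 1
        congr 1
        calc ∏ j, β (π.symm j) j = ∏ i, β (π.symm (π i)) (π i) :=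
              (Equiv.prod_comp π (fun j => β (π.symm j) j)).symm
          _ = ∏ i, β i (π i) := by
              refine Finset.prod_congr rfl (fun i _ => ?_)
              rw [Equiv.symm_apply_apply]

lemma degL_pos {N : ℕ} {C : Finset (Fin N × Fin N)} {e : Fin N × Fin N} (he : e ∈ C) :
    1 ≤ degL C e.1 :=
  Finset.card_pos.mpr ⟨e, Finset.mem_filter.mpr ⟨he, rfl⟩⟩

lemma degR_pos {N : ℕ} {C : Finset (Fin N × Fin N)} {e : Fin N × Fin N} (he : e ∈ C) :
    1 ≤ degR C e.2 :=
  Finset.card_pos.mpr ⟨e, Finset.mem_filter.mpr ⟨he, rfl⟩⟩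

lemma rP_empty {N : ℕ} (β : Fin N → Fin N → ℝ) : rP β (∅ : Finset (Fin N × Fin N)) = 1 := by
  simp [rP, degL, degR]

lemma rP_eq_zero {N : ℕ} (β : Fin N → Fin N → ℝ) {C : Finset (Fin N × Fin N)}
    (hne : C.Nonempty) (hgl : ¬ IsGenLoop C) : rP β C = 0 := by
  classical
  rw [IsGenLoop] at hgl
  push_neg at hgl
  obtain ⟨e, he, hdeg⟩ := hgl hne
  rw [rP]
  by_cases hL : 2 ≤ degL C e.1
  · have hR : degR C e.2 = 1 := le_antisymm (by have := hdeg hL; omega) (degR_pos he)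
    have : (∏ j, (1 - (degR C j : ℝ))) = 0 :=
      Finset.prod_eq_zero (Finset.mem_univ e.2) (by rw [hR]; norm_num)
    rw [this]; ring
  · have hL1 : degL C e.1 = 1 := le_antisymm (by omega) (degL_pos he)

    have : (∏ i, (1 - (degL C i : ℝ))) = 0 :=
      Finset.prod_eq_zero (Finset.mem_univ e.1) (by rw [hL1]; norm_num)
    rw [this]; ring

lemma rP_eq_loopTerm {N : ℕ} (β : Fin N → Fin N → ℝ) {C : Finset (Fin N × Fin N)} :
    rP β C = loopTerm β C := by
  classical
  rw [rP, loopTerm]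
  congr 1
  congr 1
  · refine (Finset.prod_subset (Finset.subset_univ _) (fun i _ hi => ?_)).symm
    have : degL C i = 0 := by
      rw [degL, Finset.card_eq_zero, Finset.filter_eq_empty_iff]
      intro e he h
      exact hi (Finset.mem_image.mpr ⟨e, he, h⟩)
    rw [this]; norm_num
  · refine (Finset.prod_subset (Finset.subset_univ _) (fun j _ hj => ?_)).symm
    have : degR C j = 0 := by
      rw [degR, Finset.card_eq_zero, Finset.filter_eq_empty_iff]
      intro e he h
      exact hj (Finset.mem_image.mpr ⟨e, he, h⟩)
    rw [this]; norm_num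

lemma sum_rP_split {N : ℕ} (β : Fin N → Fin N → ℝ) [DecidablePred (IsGenLoop (N := N))] :
    ∑ C : Finset (Fin N × Fin N), rP β C
      = 1 + ∑ C ∈ Finset.univ.filter (fun C : Finset (Fin N × Fin N) => IsGenLoop C),
          loopTerm β C := by
  classical
  rw [← Finset.sum_filter_add_sum_filter_not Finset.univ
    (fun C : Finset (Fin N × Fin N) => IsGenLoop C) (rP β)]
  rw [add_comm]
  congr 1
  · calc ∑ C ∈ Finset.univ.filter (fun C : Finset (Fin N × Fin N) => ¬ IsGenLoop C), rP β C
        = ∑ C ∈ Finset.univ.filter (fun C : Finset (Fin N × Fin N) => ¬ IsGenLoop C),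
            (if C = ∅ then (1:ℝ) else 0) := by
          refine Finset.sum_congr rfl (fun C hC => ?_)
          by_cases h : C = ∅
          · rw [if_pos h, h, rP_empty]
          · rw [if_neg h]
            exact rP_eq_zero β (Finset.nonempty_of_ne_empty h) (Finset.mem_filter.mp hC).2
      _ = 1 := by
          rw [Finset.sum_ite_eq' (filter (fun C : Finset (Fin N × Fin N) => ¬ IsGenLoop C) univ) (∅ : Finset (Fin N × Fin N)) (fun _ => (1:ℝ))]
          rw [if_pos]
          refine Finset.mem_filter.mpr ⟨Finset.mem_univ _, fun h => ?_⟩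
          exact Finset.not_nonempty_empty h.1
  · exact Finset.sum_congr rfl (fun C _ => rP_eq_loopTerm β)

open scoped Classical in
/-- Loop series for the permanent: if `β` is a doubly stochastic matrix with entries
in `(0,1)` forming a BP fixed point for the positive weights `p`, i.e.
`β_i^j(1-β_i^j) = p_i^j u_i v^j` for some positive `u, v`, then
`per(p) = Z_BP · (1 + Σ_C r_C)` where `Z_BP = exp(-F_BP(β))` and the sum runs over
all generalized loops of `K_{N,N}`. -/
theorem permanent_loop_series (N : ℕ) (hN : 1 ≤ N)
    (p : Fin N → Fin N → ℝ) (hp : ∀ i j, 0 < p i j)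
    (β : Fin N → Fin N → ℝ) (hβ : ∀ i j, β i j ∈ Set.Ioo (0 : ℝ) 1)
    (hrow : ∀ i, ∑ j, β i j = 1) (hcol : ∀ j, ∑ i, β i j = 1)
    (u v : Fin N → ℝ) (hu : ∀ i, 0 < u i) (hv : ∀ j, 0 < v j)
    (hfix : ∀ i j, β i j * (1 - β i j) = p i j * (u i * v j)) :
    (∑ π : Equiv.Perm (Fin N), ∏ i, p i (π i)) =
      Real.exp (-(∑ i, ∑ j, (β i j * Real.log (β i j / p i j) -
          (1 - β i j) * Real.log (1 - β i j)))) *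
        (1 + ∑ C ∈ Finset.univ.filter
            (fun C : Finset (Fin N × Fin N) => IsGenLoop C),
          loopTerm β C) := by
  have hβ0 : ∀ i j, β i j ≠ 0 := fun i j => ne_of_gt (hβ i j).1
  have hβpos : ∀ i j, (0:ℝ) < β i j := fun i j => (hβ i j).1
  have hβ1 : ∀ i j, (0:ℝ) < 1 - β i j := fun i j => by have := (hβ i j).2; linarith
  have hU : (0:ℝ) < ∏ i, u i := Finset.prod_pos (fun i _ => hu i)
  have hV : (0:ℝ) < ∏ j, v j := Finset.prod_pos (fun j _ => hv j)
  have hUV : (∏ i, u i) * (∏ j, v j) ≠ 0 := ne_of_gt (mul_pos hU hV)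
  -- free energy computation
  have hterm : ∀ i j, β i j * Real.log (β i j / p i j) -
      (1 - β i j) * Real.log (1 - β i j)
      = β i j * Real.log (u i) + β i j * Real.log (v j) - Real.log (1 - β i j) := by
    intro i j
    have hquot : β i j / p i j = (u i * v j) / (1 - β i j) := by
      rw [div_eq_div_iff (ne_of_gt (hp i j)) (ne_of_gt (hβ1 i j))]
      linear_combination hfix i j
    rw [hquot, Real.log_div (ne_of_gt (mul_pos (hu i) (hv j))) (ne_of_gt (hβ1 i j)),
      Real.log_mul (ne_of_gt (hu i)) (ne_of_gt (hv j))]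
    ring
  have hF : (∑ i, ∑ j, (β i j * Real.log (β i j / p i j) -
      (1 - β i j) * Real.log (1 - β i j)))
      = (∑ i, Real.log (u i)) + (∑ j, Real.log (v j))
        - ∑ i, ∑ j, Real.log (1 - β i j) := by
    calc (∑ i, ∑ j, (β i j * Real.log (β i j / p i j) -
        (1 - β i j) * Real.log (1 - β i j)))
        = ∑ i, ∑ j, (β i j * Real.log (u i) + β i j * Real.log (v j)
            - Real.log (1 - β i j)) := by
          exact Finset.sum_congr rfl (fun i _ => Finset.sum_congr rfl (fun j _ => hterm i j))
      _ = (∑ i, ∑ j, β i j * Real.log (u i)) + (∑ i, ∑ j, β i j * Real.log (v j))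
            - ∑ i, ∑ j, Real.log (1 - β i j) := by
          simp [Finset.sum_add_distrib, Finset.sum_sub_distrib]
      _ = (∑ i, Real.log (u i)) + (∑ j, Real.log (v j))
            - ∑ i, ∑ j, Real.log (1 - β i j) := by
          congr 1
          congr 1
          · refine Finset.sum_congr rfl (fun i _ => ?_)
            rw [← Finset.sum_mul, hrow i, one_mul]
          · rw [Finset.sum_comm]
            refine Finset.sum_congr rfl (fun j _ => ?_)
            rw [← Finset.sum_mul, hcol j, one_mul]
  have hE : Real.exp (-(∑ i, ∑ j, (β i j * Real.log (β i j / p i j) -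
      (1 - β i j) * Real.log (1 - β i j))))
      = (∏ i, ∏ j, (1 - β i j)) / ((∏ i, u i) * (∏ j, v j)) := by
    rw [hF]
    rw [show -((∑ i, Real.log (u i)) + (∑ j, Real.log (v j))
        - ∑ i, ∑ j, Real.log (1 - β i j))
      = (∑ i, ∑ j, Real.log (1 - β i j))
        - ((∑ i, Real.log (u i)) + (∑ j, Real.log (v j))) by ring]
    rw [Real.exp_sub, Real.exp_add]
    congr 1
    · rw [Real.exp_sum]
      refine Finset.prod_congr rfl (fun i _ => ?_)
      rw [Real.exp_sum]
      exact Finset.prod_congr rfl (fun j _ => Real.exp_log (hβ1 i j))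
    · congr 1
      · rw [Real.exp_sum]
        exact Finset.prod_congr rfl (fun i _ => Real.exp_log (hu i))
      · rw [Real.exp_sum]
        exact Finset.prod_congr rfl (fun j _ => Real.exp_log (hv j))
  rw [hE, ← sum_rP_split β, sum_rP β hβ hrow hcol, Finset.mul_sum]
  refine Finset.sum_congr rfl (fun π _ => ?_)
  -- per-permutation computation
  have h1 : (∏ i, ∏ j, (1 - β i j)) *
      ∏ e : Fin N × Fin N, (if π e.1 = e.2 then (β e.1 e.2)⁻¹ else (1 - β e.1 e.2)⁻¹)
      = ∏ i, ((1 - β i (π i)) * (β i (π i))⁻¹) := by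
    rw [Fintype.prod_prod_type, ← Finset.prod_mul_distrib]
    refine Finset.prod_congr rfl (fun i _ => ?_)
    rw [← Finset.prod_mul_distrib]
    have : ∀ j ∈ (univ : Finset (Fin N)),
        (1 - β i j) * (if π i = j then (β i j)⁻¹ else (1 - β i j)⁻¹)
          = (if π i = j then (1 - β i j) * (β i j)⁻¹ else 1) := by
      intro j _
      by_cases h : π i = j
      · rw [if_pos h, if_pos h]
      · rw [if_neg h, if_neg h, mul_inv_cancel₀ (ne_of_gt (hβ1 i j))]
    rw [Finset.prod_congr rfl this, Finset.prod_ite_eq]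
    simp
  have key : (∏ i, ∏ j, (1 - β i j)) *
      ((∏ i, β i (π i)) * (∏ i, β i (π i)) *
        ∏ e : Fin N × Fin N, (if π e.1 = e.2 then (β e.1 e.2)⁻¹ else (1 - β e.1 e.2)⁻¹))
      = (∏ i, p i (π i)) * ((∏ i, u i) * (∏ j, v j)) := by
    calc (∏ i, ∏ j, (1 - β i j)) *
        ((∏ i, β i (π i)) * (∏ i, β i (π i)) *
          ∏ e : Fin N × Fin N, (if π e.1 = e.2 then (β e.1 e.2)⁻¹ else (1 - β e.1 e.2)⁻¹))
        = (∏ i, β i (π i)) * (∏ i, β i (π i)) *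
            ((∏ i, ∏ j, (1 - β i j)) *
              ∏ e : Fin N × Fin N, (if π e.1 = e.2 then (β e.1 e.2)⁻¹ else (1 - β e.1 e.2)⁻¹)) := by
          ring
      _ = (∏ i, β i (π i)) * (∏ i, β i (π i)) *
            ∏ i, ((1 - β i (π i)) * (β i (π i))⁻¹) := by rw [h1]
      _ = ∏ i, (β i (π i) * (1 - β i (π i))) := by
          rw [← Finset.prod_mul_distrib, ← Finset.prod_mul_distrib]
          refine Finset.prod_congr rfl (fun i _ => ?_)
          rw [show β i (π i) * β i (π i) * ((1 - β i (π i)) * (β i (π i))⁻¹)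
              = (β i (π i) * (β i (π i))⁻¹) * (β i (π i) * (1 - β i (π i))) from by ring,
            mul_inv_cancel₀ (hβ0 i (π i)), one_mul]
      _ = ∏ i, (p i (π i) * (u i * v (π i))) :=
          Finset.prod_congr rfl (fun i _ => hfix i (π i))
      _ = (∏ i, p i (π i)) * ((∏ i, u i) * ∏ i, v (π i)) := by
          rw [Finset.prod_mul_distrib, Finset.prod_mul_distrib]
      _ = (∏ i, p i (π i)) * ((∏ i, u i) * ∏ j, v j) := by
          rw [Equiv.prod_comp π v]
  rw [div_mul_eq_mul_div, key, mul_div_assoc, div_self hUV, mul_one]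
end

section
/- Let N ≥ 1, let p = (p_i^j) be an N×N matrix with all entries strictly positive, and define the Bethe free energy F_BP(β) = Σ_{i,j} ( β_i^j ln(β_i^j/p_i^j) − (1 − β_i^j) ln(1 − β_i^j) ) on matrices β with entries in (0,1). Suppose β, with all entries in (0,1), is a local extremum of F_BP restricted to the affine set of matrices satisfying Σ_j β_i^j = 1 for all i and Σ_i β_i^j = 1 for all j. Then there exist real numbers μ_1, …, μ_N and μ^1, …, μ^N such that β_i^j (1 − β_i^j) = p_i^j exp(μ_i + μ^j) for all i, j. -/
/-!
Moving an interior extremum `β` along `t ↦ β + t • (eᵢ - eᵢ') ⊗ (eⱼ - eⱼ')` preserves all row and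
column sums, so the derivative of `F_BP` along this line vanishes. For the gradient
`g = log (β / p) + log (1 - β) + 2` this says `g i j + g i' j' = g i j' + g i' j`, so
`g i j = u i + v j`, and exponentiating `g - 2 = log (β (1 - β) / p)` gives the multipliers.
-/

open Real Finset Filter Topology

theorem IsLocalExtrOn.eq_zero_of_hasDerivAt_add_smul {E : Type*} [TopologicalSpace E]
    [AddCommGroup E] [Module ℝ E] [ContinuousAdd E] [ContinuousSMul ℝ E]
    {f : E → ℝ} {s : Set E} {x v : E} {f' : ℝ} (hf : IsLocalExtrOn f s x)
    (hs : ∀ t : ℝ, x + t • v ∈ s) (hd : HasDerivAt (fun t : ℝ => f (x + t • v)) f' 0) :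
    f' = 0 := by
  have hx : x + (0 : ℝ) • v = x := by simp
  have hline : Tendsto (fun t : ℝ => x + t • v) (𝓝 0) (𝓝[s] (x + (0 : ℝ) • v)) :=
    tendsto_nhdsWithin_iff.2
      ⟨(continuous_const.add (continuous_id.smul continuous_const)).tendsto 0, .of_forall hs⟩
  rw [← hx] at hf
  exact IsLocalExtr.hasDerivAt_eq_zero
    (hf.comp_tendsto (g := fun t : ℝ => x + t • v) (b := 0) hline) hd

theorem exists_eq_add_of_add_eq_add {ι κ G : Type*} [AddCommGroup G] {g : ι → κ → G}
    (h : ∀ i i' j j', g i j + g i' j' = g i j' + g i' j) :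
    ∃ (u : ι → G) (v : κ → G), ∀ i j, g i j = u i + v j := by
  rcases isEmpty_or_nonempty ι with hι | ⟨⟨i₀⟩⟩
  · exact ⟨0, 0, fun i => isEmptyElim i⟩
  rcases isEmpty_or_nonempty κ with hκ | ⟨⟨j₀⟩⟩
  · exact ⟨0, 0, fun _ j => isEmptyElim j⟩
  refine ⟨fun i => g i j₀ - g i₀ j₀, fun j => g i₀ j, fun i j => ?_⟩
  rw [sub_add_eq_add_sub]
  exact eq_sub_of_add_eq (h i i₀ j j₀)

theorem sum_single_sub_single_mul {ι : Type*} [Fintype ι] [DecidableEq ι] (i i' : ι)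
    (w : ι → ℝ) : ∑ a, (Pi.single i 1 - Pi.single i' 1 : ι → ℝ) a * w a = w i - w i' := by
  simp [sub_mul, sum_sub_distrib, Pi.single_apply]

theorem hasDerivAt_betheTerm {x c : ℝ} (hx₀ : 0 < x) (hx₁ : x < 1) (hc : c ≠ 0) :
    HasDerivAt (fun y => y * log (y / c) - (1 - y) * log (1 - y))
      (log (x / c) + log (1 - x) + 2) x := by
  have hxc : x / c ≠ 0 := div_ne_zero hx₀.ne' hc
  have h1x : 1 - x ≠ 0 := sub_ne_zero.2 hx₁.ne'
  have hL := (hasDerivAt_id' x).fun_mul (((hasDerivAt_id' x).div_const c).log hxc)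
  have hR := ((hasDerivAt_id' x).const_sub 1).fun_mul (((hasDerivAt_id' x).const_sub 1).log h1x)
  refine (hL.fun_sub hR).congr_deriv ?_
  field_simp
  ring

section Bethe

variable {ι κ : Type*}

noncomputable def betheGradient (p β : ι → κ → ℝ) (i : ι) (j : κ) : ℝ :=
  log (β i j / p i j) + log (1 - β i j) + 2

theorem mul_one_sub_eq_mul_exp_betheGradient {p β : ι → κ → ℝ} {i : ι} {j : κ}
    (hp : 0 < p i j) (hβ : β i j ∈ Set.Ioo (0 : ℝ) 1) :
    β i j * (1 - β i j) = p i j * exp (betheGradient p β i j - 2) := by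
  have h1β : 0 < 1 - β i j := sub_pos.2 hβ.2
  rw [betheGradient, add_sub_cancel_right, exp_add, exp_log (div_pos hβ.1 hp), exp_log h1β]
  field_simp

variable [Fintype ι] [Fintype κ]

noncomputable def betheFreeEnergy (p b : ι → κ → ℝ) : ℝ :=
  ∑ i, ∑ j, (b i j * log (b i j / p i j) - (1 - b i j) * log (1 - b i j))

theorem hasDerivAt_betheFreeEnergy_add_smul {p β : ι → κ → ℝ} (hp : ∀ i j, p i j ≠ 0)
    (hβ : ∀ i j, β i j ∈ Set.Ioo (0 : ℝ) 1) (D : ι → κ → ℝ) :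
    HasDerivAt (fun t : ℝ => betheFreeEnergy p (β + t • D))
      (∑ i, ∑ j, betheGradient p β i j * D i j) 0 := by
  refine HasDerivAt.fun_sum fun i _ => HasDerivAt.fun_sum fun j _ => ?_
  have hline : HasDerivAt (fun t : ℝ => β i j + t * D i j) (D i j) 0 := by
    simpa using ((hasDerivAt_id (0 : ℝ)).mul_const (D i j)).const_add (β i j)
  exact (hasDerivAt_betheTerm (hβ i j).1 (hβ i j).2 (hp i j)).comp_of_eq 0 hline (by simp)

theorem add_smul_mem_of_sum_eq_zero {β D : ι → κ → ℝ}
    (hrow : ∀ i, ∑ j, β i j = 1) (hcol : ∀ j, ∑ i, β i j = 1)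
    (hDrow : ∀ i, ∑ j, D i j = 0) (hDcol : ∀ j, ∑ i, D i j = 0) (t : ℝ) :
    β + t • D ∈ {b : ι → κ → ℝ | (∀ i, ∑ j, b i j = 1) ∧ (∀ j, ∑ i, b i j = 1)} := by
  simp [sum_add_distrib, ← mul_sum, hrow, hcol, hDrow, hDcol]

theorem betheGradient_add_eq_add [DecidableEq ι] [DecidableEq κ] {p β : ι → κ → ℝ}
    (hp : ∀ i j, p i j ≠ 0) (hβ : ∀ i j, β i j ∈ Set.Ioo (0 : ℝ) 1)
    (hrow : ∀ i, ∑ j, β i j = 1) (hcol : ∀ j, ∑ i, β i j = 1)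
    (hextr : IsLocalExtrOn (betheFreeEnergy p)
      {b : ι → κ → ℝ | (∀ i, ∑ j, b i j = 1) ∧ (∀ j, ∑ i, b i j = 1)} β)
    (i i' : ι) (j j' : κ) :
    betheGradient p β i j + betheGradient p β i' j' =
      betheGradient p β i j' + betheGradient p β i' j := by
  set g := betheGradient p β
  set r : ι → ℝ := Pi.single i 1 - Pi.single i' 1
  set c : κ → ℝ := Pi.single j 1 - Pi.single j' 1
  have hr : ∑ a, r a = 0 := by simp [r, sum_sub_distrib]
  have hc : ∑ b, c b = 0 := by simp [c, sum_sub_distrib]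
  have hderiv : ∑ a, ∑ b, g a b * (r a * c b) = 0 :=
    hextr.eq_zero_of_hasDerivAt_add_smul
      (add_smul_mem_of_sum_eq_zero hrow hcol (by simp [← mul_sum, hc]) (by simp [← sum_mul, hr]))
      (hasDerivAt_betheFreeEnergy_add_smul hp hβ fun a b => r a * c b)
  have hsum : ∑ a, ∑ b, g a b * (r a * c b) = (g i j - g i j') - (g i' j - g i' j') := by
    calc ∑ a, ∑ b, g a b * (r a * c b) = ∑ a, r a * ∑ b, c b * g a b := by
          refine sum_congr rfl fun a _ => ?_
          rw [mul_sum]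
          exact sum_congr rfl fun b _ => by ring
      _ = ∑ a, r a * (g a j - g a j') := by simp only [c, sum_single_sub_single_mul]
      _ = (g i j - g i j') - (g i' j - g i' j') := sum_single_sub_single_mul i i' _
  linarith

end Bethe

theorem bethe_stationarity_general (N : ℕ)
    (p : Fin N → Fin N → ℝ) (hp : ∀ i j, 0 < p i j)
    (β : Fin N → Fin N → ℝ) (hβ : ∀ i j, β i j ∈ Set.Ioo (0 : ℝ) 1)
    (hrow : ∀ i, ∑ j, β i j = 1) (hcol : ∀ j, ∑ i, β i j = 1)
    (hextr : IsLocalExtrOn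
      (fun b : Fin N → Fin N → ℝ => ∑ i, ∑ j,
        (b i j * Real.log (b i j / p i j) - (1 - b i j) * Real.log (1 - b i j)))
      {b : Fin N → Fin N → ℝ |
        (∀ i, ∑ j, b i j = 1) ∧ (∀ j, ∑ i, b i j = 1)} β) :
    ∃ μL μR : Fin N → ℝ, ∀ i j,
      β i j * (1 - β i j) = p i j * Real.exp (μL i + μR j) := by
  obtain ⟨u, v, huv⟩ := exists_eq_add_of_add_eq_add
    (betheGradient_add_eq_add (fun i j => (hp i j).ne') hβ hrow hcol hextr)
  refine ⟨u, fun j => v j - 2, fun i j => ?_⟩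
  rw [mul_one_sub_eq_mul_exp_betheGradient (hp i j) (hβ i j), huv, add_sub_assoc]

/-- At an interior local extremum `β` (all entries in `(0,1)`) of the Bethe free energy
`F_BP(β) = Σ_{i,j} (β_i^j ln(β_i^j/p_i^j) - (1-β_i^j) ln(1-β_i^j))` restricted to the
affine set of matrices with all row and column sums equal to `1`, there exist chemical
potentials `μ_i, μ^j` with `β_i^j (1-β_i^j) = p_i^j exp(μ_i + μ^j)` for all `i, j`. -/
theorem bethe_stationarity (N : ℕ) (hN : 1 ≤ N)
    (p : Fin N → Fin N → ℝ) (hp : ∀ i j, 0 < p i j)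
    (β : Fin N → Fin N → ℝ) (hβ : ∀ i j, β i j ∈ Set.Ioo (0 : ℝ) 1)
    (hrow : ∀ i, ∑ j, β i j = 1) (hcol : ∀ j, ∑ i, β i j = 1)
    (hextr : IsLocalExtrOn
      (fun b : Fin N → Fin N → ℝ => ∑ i, ∑ j,
        (b i j * Real.log (b i j / p i j) - (1 - b i j) * Real.log (1 - b i j)))
      {b : Fin N → Fin N → ℝ |
        (∀ i, ∑ j, b i j = 1) ∧ (∀ j, ∑ i, b i j = 1)} β) :
    ∃ μL μR : Fin N → ℝ, ∀ i j,
      β i j * (1 - β i j) = p i j * Real.exp (μL i + μR j) :=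
  bethe_stationarity_general N p hp β hβ hrow hcol hextr
end
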